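/- Let R be a commutative ring and K a perfect complex over R. If K ⊗^L_R κ(p) is acyclic for every prime ideal p of R (where κ(p) is the residue field at p), then K is acyclic, i.e., K ≅ 0 in D(R). -/

import Mathlib

open CategoryTheory CategoryTheory.Limits

/-- The residue field `κ(p)` at a prime `p`, as an `R`-module. -/
noncomputable abbrev residueFieldMod {R : Type u} [CommRing R] (p : PrimeSpectrum R) :
    ModuleCat.{u} R :=
  ModuleCat.of R (IsLocalRing.ResidueField (Localization.AtPrime p.asIdeal))

/-- Termwise tensor of a chain complex with a module. -/
noncomputable def tensorComplex {R : Type u} [CommRing R]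
    (K : ChainComplex (ModuleCat.{u} R) ℤ) (N : ModuleCat.{u} R) :
    ChainComplex (ModuleCat.{u} R) ℤ :=
  ((MonoidalCategory.tensorRight N).mapHomologicalComplex _).obj K

/-! Climb the bounded-below complex from its bottom, carrying a contraction `d ∘ s + t ∘ d = id`
of `K` in degree `n + 1` (trivially available below the bottom). Given one, `id - s ∘ d` retracts
`K_{n+2}` onto its cycles `Z`, so `Z` is finite and `Z ⊗ κ(p)` is a summand of `K_{n+2} ⊗ κ(p)`;
exactness of the fibres then makes `K_{n+3} → Z` surjective on every fibre, hence surjective by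
Nakayama. Lifting the retraction through it, by projectivity of `K_{n+2}`, gives the contraction
in degree `n + 2`. -/

open TensorProduct

section Fibers

variable {R : Type*} [CommRing R] {N M P Q : Type*} [AddCommGroup N] [Module R N]
  [AddCommGroup M] [Module R M] [AddCommGroup P] [Module R P] [AddCommGroup Q] [Module R Q]

theorem Module.subsingleton_of_subsingleton_rTensor_residueField [Module.Finite R M]
    (h : ∀ p : PrimeSpectrum R, Subsingleton (M ⊗[R] p.asIdeal.ResidueField)) :
    Subsingleton M := by
  rw [← Module.support_eq_empty_iff (R := R), Set.eq_empty_iff_forall_notMem]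
  intro p hp
  rw [mem_support_iff_nontrivial_residueField_tensorProduct,
    (TensorProduct.comm R _ _).nontrivial_congr] at hp
  exact not_nontrivial_iff_subsingleton.mpr (h p) hp

theorem LinearMap.surjective_of_surjective_rTensor_residueField [Module.Finite R M]
    (f : N →ₗ[R] M)
    (hf : ∀ p : PrimeSpectrum R, Function.Surjective (f.rTensor p.asIdeal.ResidueField)) :
    Function.Surjective f := by
  rw [← range_eq_top, ← Submodule.Quotient.subsingleton_iff]
  refine Module.subsingleton_of_subsingleton_rTensor_residueField (R := R) fun p ↦ ?_
  set κ := p.asIdeal.ResidueField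
  have hexact := rTensor_exact κ (exact_map_mkQ_range f) (Submodule.mkQ_surjective _)
  refine subsingleton_of_forall_eq 0 fun z ↦ ?_
  obtain ⟨w, rfl⟩ := rTensor_surjective κ (Submodule.mkQ_surjective (range f)) z
  obtain ⟨u, rfl⟩ := hf p w
  exact hexact.apply_apply_eq_zero u

theorem LinearMap.exact_of_exact_rTensor_residueField {f : N →ₗ[R] M} {g : M →ₗ[R] P}
    (hgf : g ∘ₗ f = 0) (ρ : M →ₗ[R] ker g) (hρ : ∀ x : ker g, ρ x = x)
    [Module.Finite R (ker g)]
    (hex : ∀ p : PrimeSpectrum R, Function.Exact (f.rTensor p.asIdeal.ResidueField)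
      (g.rTensor p.asIdeal.ResidueField)) :
    Function.Exact f g := by
  have hfker : ∀ a, f a ∈ ker g := fun a ↦ by simp [← comp_apply, hgf]
  set f' := f.codRestrict (ker g) hfker
  have hρf : ρ ∘ₗ f = f' := ext fun a ↦ hρ (f' a)
  have hρι : ρ ∘ₗ (ker g).subtype = LinearMap.id := ext hρ
  suffices Function.Surjective f' by
    refine LinearMap.exact_iff.mpr (le_antisymm (fun x hx ↦ ?_) ?_)
    · obtain ⟨a, ha⟩ := this ⟨x, hx⟩
      exact ⟨a, congrArg Subtype.val ha⟩
    · rintro x ⟨a, rfl⟩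
      exact hfker a
  refine surjective_of_surjective_rTensor_residueField f' fun p w ↦ ?_
  set κ := p.asIdeal.ResidueField
  have hgι : g ∘ₗ (ker g).subtype = 0 := ext fun x ↦ x.2
  obtain ⟨u, hu⟩ := ((hex p) (((ker g).subtype.rTensor κ) w)).mp <| by
    rw [← rTensor_comp_apply, hgι, rTensor_zero, zero_apply]
  refine ⟨u, ?_⟩
  rw [← hρf, rTensor_comp_apply, hu, ← rTensor_comp_apply, hρι, rTensor_id, id_apply]

theorem LinearMap.exact_and_exists_contraction_of_exact_rTensor_residueField
    [Module.Finite R M] [Module.Projective R M]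
    {f : N →ₗ[R] M} {g : M →ₗ[R] P} {e : P →ₗ[R] Q} (hgf : g ∘ₗ f = 0) (heg : e ∘ₗ g = 0)
    (hex : ∀ p : PrimeSpectrum R, Function.Exact (f.rTensor p.asIdeal.ResidueField)
      (g.rTensor p.asIdeal.ResidueField))
    {s : P →ₗ[R] M} {t : Q →ₗ[R] P} (hst : g ∘ₗ s + t ∘ₗ e = LinearMap.id) :
    Function.Exact f g ∧ ∃ r : M →ₗ[R] N, f ∘ₗ r + s ∘ₗ g = LinearMap.id := by
  set φ := LinearMap.id - s ∘ₗ g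
  have hgφ : g ∘ₗ φ = 0 := by
    calc g ∘ₗ φ = g - (g ∘ₗ s) ∘ₗ g := by simp [φ, comp_sub, comp_assoc]
      _ = (t ∘ₗ e) ∘ₗ g := by rw [eq_sub_of_add_eq hst]; simp [sub_comp]
      _ = 0 := by rw [comp_assoc, heg, comp_zero]
  have hφmem : ∀ x, φ x ∈ ker g := fun x ↦ by simp [← comp_apply, hgφ]
  set ρ := φ.codRestrict (ker g) hφmem
  have hρ : ∀ x : ker g, ρ x = x := fun x ↦ Subtype.ext <| by simp [ρ, φ]
  have : Module.Finite R (ker g) :=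
    Module.Finite.of_surjective ρ fun x ↦ ⟨x, hρ x⟩
  have hfg := exact_of_exact_rTensor_residueField hgf ρ hρ hex
  have hf' : Function.Surjective (f.codRestrict (ker g) (hfg.apply_apply_eq_zero ·)) :=
    fun x ↦ (hfg x).mp x.2 |>.imp fun _ ha ↦ Subtype.ext ha
  obtain ⟨r, hr⟩ := Module.projective_lifting_property _ ρ hf'
  refine ⟨hfg, r, ?_⟩
  have hfr : f ∘ₗ r = φ := congrArg ((ker g).subtype ∘ₗ ·) hr
  rw [hfr, sub_add_cancel]

end Fibers

theorem ChainComplex.isZero_homology_succ_iff_exact {R : Type*} [Ring R]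
    (K : ChainComplex (ModuleCat R) ℤ) (n : ℤ) :
    IsZero (K.homology (n + 1)) ↔
      Function.Exact (K.d (n + 1 + 1) (n + 1)).hom (K.d (n + 1) n).hom := by
  rw [← HomologicalComplex.exactAt_iff_isZero_homology,
    HomologicalComplex.exactAt_iff' _ (n + 1 + 1) (n + 1) n (by simp)
      (by simp only [ChainComplex.next]; omega),
    ShortComplex.ShortExact.moduleCat_exact_iff_function_exact]
  rfl

/-- If `K` is a perfect complex over `R` (a bounded complex of finitely generated
projective modules) such that `K ⊗^L_R κ(p)` is acyclic for every prime `p`, then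
`K` itself is acyclic. -/
theorem acyclic_of_acyclic_residueFields {R : Type u} [CommRing R]
    (K : ChainComplex (ModuleCat.{u} R) ℤ)
    (hproj : ∀ i : ℤ, Module.Projective R (K.X i))
    (hfin : ∀ i : ℤ, Module.Finite R (K.X i))
    (hbdd : ∃ m M : ℤ, ∀ i : ℤ, (i < m ∨ M < i) → IsZero (K.X i))
    (h : ∀ (p : PrimeSpectrum R) (i : ℤ),
      IsZero ((tensorComplex K (residueFieldMod p)).homology i)) :
    ∀ i : ℤ, IsZero (K.homology i) := by
  obtain ⟨m, _, hm⟩ := hbdd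
  have hdd : ∀ i j k, (K.d j k).hom ∘ₗ (K.d i j).hom = 0 := fun i j k ↦ by
    rw [← ModuleCat.hom_comp, K.d_comp_d, ModuleCat.hom_zero]
  have hfib : ∀ (p : PrimeSpectrum R) (n : ℤ),
      Function.Exact ((K.d (n + 1 + 1) (n + 1)).hom.rTensor p.asIdeal.ResidueField)
        ((K.d (n + 1) n).hom.rTensor p.asIdeal.ResidueField) := fun p n ↦
    (ChainComplex.isZero_homology_succ_iff_exact _ n).mp (h p (n + 1))
  let Contracted (n : ℤ) : Prop := ∃ (s : K.X (n + 1) →ₗ[R] K.X (n + 1 + 1))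
    (t : K.X n →ₗ[R] K.X (n + 1)),
    (K.d (n + 1 + 1) (n + 1)).hom ∘ₗ s + t ∘ₗ (K.d (n + 1) n).hom = LinearMap.id
  have hstep (n : ℤ) : Contracted n →
      IsZero (K.homology (n + 1 + 1)) ∧ Contracted (n + 1) := by
    rintro ⟨s, t, hst⟩
    obtain ⟨hexact, r, hr⟩ := LinearMap.exact_and_exists_contraction_of_exact_rTensor_residueField
      (hdd _ _ _) (hdd _ _ _) (hfib · (n + 1)) hst
    exact ⟨(ChainComplex.isZero_homology_succ_iff_exact K (n + 1)).mpr hexact, r, s, hr⟩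
  have hbase (n : ℤ) (hn : n + 1 < m) : Contracted n := by
    have := ModuleCat.isZero_iff_subsingleton.mp (hm (n + 1) (.inl hn))
    exact ⟨0, 0, LinearMap.ext fun _ ↦ Subsingleton.elim _ _⟩
  have hcontr (n : ℤ) : Contracted n :=
    Int.inductionOn' n (m - 2) (hbase _ (by omega)) (fun k _ hk ↦ (hstep k hk).2)
      (fun k hk _ ↦ hbase _ (by omega))
  intro i
  obtain ⟨n, rfl⟩ : ∃ n, i = n + 1 + 1 := ⟨i - 2, by omega⟩
  exact (hstep n (hcontr n)).1
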